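/- Let q ≥ 1 and let A be a complex matrix on ℋ^{⊗q} whose symmetric part 𝖯_q(A) is Hermitian. Then for every n ≥ 0 and every density matrix ρ on ℂ^d, Tr[𝖯_q(A) ρ^{⊗q}] ≤ λ_max(𝖯_{q+n}(A ⊗ I^{⊗n})); that is, each μ_n(A) is an upper bound on max_ρ Tr[A ρ^{⊗q}]. -/

import Mathlib

open Matrix Filter
open scoped ComplexOrder

/-- The permutation matrix `P_π` on `ℋ^{⊗n}` (`ℋ = ℂ^d`), acting by
`(P_π x)_{(i₁,…,iₙ)} = x_{(i_{π(1)},…,i_{π(n)})}`. -/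
noncomputable def permMatrix (d n : ℕ) (π : Equiv.Perm (Fin n)) :
    Matrix (Fin n → Fin d) (Fin n → Fin d) ℂ :=
  fun i j => if j = i ∘ π then 1 else 0

/-- The symmetrization `𝖯_n(X) = (1/n!) Σ_{π ∈ S_n} P_π† X P_π`. -/
noncomputable def symmetrize (d n : ℕ)
    (X : Matrix (Fin n → Fin d) (Fin n → Fin d) ℂ) :
    Matrix (Fin n → Fin d) (Fin n → Fin d) ℂ :=
  (n.factorial : ℂ)⁻¹ • ∑ π : Equiv.Perm (Fin n),
    (permMatrix d n π)ᴴ * X * permMatrix d n π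

/-- The largest (real) eigenvalue of a matrix: `λ_max`. -/
noncomputable def lamMax {I : Type*} [Fintype I] [DecidableEq I]
    (X : Matrix I I ℂ) : ℝ :=
  sSup {t : ℝ | ∃ v : I → ℂ, v ≠ 0 ∧ X *ᵥ v = (t : ℂ) • v}

/-- The `q`-fold Kronecker power `ρ^{⊗q}`. -/
noncomputable def tensPow (d q : ℕ) (ρ : Matrix (Fin d) (Fin d) ℂ) :
    Matrix (Fin q → Fin d) (Fin q → Fin d) ℂ :=
  fun i j => ∏ a, ρ (i a) (j a)

/-- The matrix `A ⊗ I^{⊗n}` on `ℋ^{⊗(q+n)}`. -/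
noncomputable def tensExt (d q n : ℕ)
    (A : Matrix (Fin q → Fin d) (Fin q → Fin d) ℂ) :
    Matrix (Fin (q + n) → Fin d) (Fin (q + n) → Fin d) ℂ :=
  fun i j =>
    A (fun a => i (Fin.castAdd n a)) (fun a => j (Fin.castAdd n a)) *
      ∏ b : Fin n, (if i (Fin.natAdd q b) = j (Fin.natAdd q b) then (1 : ℂ) else 0)

/-- A density matrix: positive semidefinite with unit trace. -/
def IsDensity (d : ℕ) (ρ : Matrix (Fin d) (Fin d) ℂ) : Prop :=
  ρ.PosSemidef ∧ ρ.trace = 1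

/-!
Tracing against the permutation-invariant state `ρ^{⊗m}` does not see symmetrization, and
`Tr[(A ⊗ I^{⊗n}) ρ^{⊗(q+n)}] = Tr[A ρ^{⊗q}] (Tr ρ)^n`; hence the left-hand side equals
`Tr[M ρ^{⊗(q+n)}]` for `M = 𝖯_{q+n}(A ⊗ I^{⊗n})`. Embedding `S_q` into `S_{q+n}` as the
permutations fixing the last `n` factors shows `M = 𝖯_{q+n}(𝖯_q(A) ⊗ I^{⊗n})`, so `M` is
Hermitian. Finally `M ≤ λ_max(M) • 1` in the Loewner order, and pairing with the density matrix
`ρ^{⊗(q+n)}` gives `Tr[M ρ^{⊗(q+n)}] ≤ λ_max(M)`.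
-/

lemma inv_factorial_smul_sum_perm_const {M : Type*} [AddCommGroup M] [Module ℂ M] (n : ℕ)
    (x : M) : (n.factorial : ℂ)⁻¹ • ∑ _π : Equiv.Perm (Fin n), x = x := by
  rw [Finset.sum_const, Finset.card_univ, Fintype.card_perm, Fintype.card_fin,
    ← Nat.cast_smul_eq_nsmul ℂ, smul_smul, inv_mul_cancel₀ (by positivity), one_smul]

lemma trace_submatrix_equiv {I J R : Type*} [Fintype I] [Fintype J] [AddCommMonoid R]
    (M : Matrix J J R) (e : I ≃ J) : (M.submatrix e e).trace = M.trace :=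
  e.sum_comp M.diag

section Spectrum

variable {I : Type*} [Fintype I] [DecidableEq I]

open scoped MatrixOrder

lemma Matrix.PosSemidef.trace_mul_nonneg {N σ : Matrix I I ℂ} (hN : N.PosSemidef)
    (hσ : σ.PosSemidef) : 0 ≤ (N * σ).trace := by
  obtain ⟨B, rfl⟩ := CStarAlgebra.nonneg_iff_eq_star_mul_self.mp hσ.nonneg
  rw [star_eq_conjTranspose, ← Matrix.mul_assoc, trace_mul_cycle]
  exact (hN.mul_mul_conjTranspose_same B).trace_nonneg

lemma mem_spectrum_real_iff_exists_mulVec_eq (M : Matrix I I ℂ) (t : ℝ) :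
    t ∈ spectrum ℝ M ↔ ∃ v : I → ℂ, v ≠ 0 ∧ M *ᵥ v = (t : ℂ) • v := by
  rw [← spectrum.algebraMap_mem_iff ℂ, ← spectrum_toLin',
    ← Module.End.hasEigenvalue_iff_mem_spectrum, Module.End.hasEigenvalue_iff,
    Submodule.ne_bot_iff]
  simp [and_comm]

lemma lamMax_eq_sSup_spectrum (M : Matrix I I ℂ) : lamMax M = sSup (spectrum ℝ M) := by
  simp_rw [lamMax, Set.ext fun t => mem_spectrum_real_iff_exists_mulVec_eq M t]
  rfl

lemma Matrix.IsHermitian.le_algebraMap_lamMax {M : Matrix I I ℂ} (hM : M.IsHermitian) :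
    M ≤ algebraMap ℝ _ (lamMax M) := by
  rw [le_algebraMap_iff_spectrum_le hM.isSelfAdjoint, lamMax_eq_sSup_spectrum]
  exact fun t ht => le_csSup finite_real_spectrum.bddAbove ht

lemma Matrix.IsHermitian.re_trace_mul_le_lamMax {M σ : Matrix I I ℂ} (hM : M.IsHermitian)
    (hσ : σ.PosSemidef) (htr : σ.trace = 1) :
    (M * σ).trace.re ≤ lamMax M := by
  have h := (le_iff.mp hM.le_algebraMap_lamMax).trace_mul_nonneg hσ
  rw [Matrix.sub_mul, trace_sub, sub_nonneg] at h
  simpa [Algebra.algebraMap_eq_smul_one, htr] using (Complex.le_def.mp h).1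

end Spectrum

def precomp {ι α : Type*} (π : Equiv.Perm ι) : (ι → α) ≃ (ι → α) :=
  Equiv.arrowCongr π.symm (Equiv.refl α)

@[simp] lemma precomp_apply {ι α : Type*} (π : Equiv.Perm ι) (f : ι → α) :
    precomp π f = f ∘ π := rfl

lemma permMatrix_eq_submatrix_one (d n : ℕ) (π : Equiv.Perm (Fin n)) :
    permMatrix d n π =
      (1 : Matrix (Fin n → Fin d) (Fin n → Fin d) ℂ).submatrix (precomp π) id := by
  ext i j
  simp [permMatrix, one_apply, eq_comm]

lemma conjTranspose_permMatrix_mul_mul_permMatrix (d n : ℕ) (π : Equiv.Perm (Fin n))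
    (X : Matrix (Fin n → Fin d) (Fin n → Fin d) ℂ) :
    (permMatrix d n π)ᴴ * X * permMatrix d n π =
      X.submatrix (precomp π⁻¹) (precomp π⁻¹) := by
  rw [permMatrix_eq_submatrix_one, conjTranspose_submatrix, conjTranspose_one,
    one_submatrix_mul, mul_submatrix_one]
  rfl

lemma symmetrize_eq_sum_submatrix (d n : ℕ) (X : Matrix (Fin n → Fin d) (Fin n → Fin d) ℂ) :
    symmetrize d n X =
      (n.factorial : ℂ)⁻¹ • ∑ π : Equiv.Perm (Fin n),
        X.submatrix (precomp π) (precomp π) := by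
  rw [symmetrize, ← Equiv.sum_comp (Equiv.inv _)]
  simp [conjTranspose_permMatrix_mul_mul_permMatrix]

lemma symmetrize_submatrix_precomp (d n : ℕ) (X : Matrix (Fin n → Fin d) (Fin n → Fin d) ℂ)
    (σ : Equiv.Perm (Fin n)) :
    symmetrize d n (X.submatrix (precomp σ) (precomp σ)) = symmetrize d n X := by
  simp_rw [symmetrize_eq_sum_submatrix, submatrix_submatrix]
  congr 1
  exact Equiv.sum_comp (Equiv.mulRight σ) fun π => X.submatrix (precomp π) (precomp π)

lemma symmetrize_sum {ι : Type*} (d n : ℕ) (s : Finset ι)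
    (X : ι → Matrix (Fin n → Fin d) (Fin n → Fin d) ℂ) :
    symmetrize d n (∑ i ∈ s, X i) = ∑ i ∈ s, symmetrize d n (X i) := by
  simp only [symmetrize, Matrix.mul_sum, Matrix.sum_mul, Finset.smul_sum]
  exact Finset.sum_comm

lemma symmetrize_smul (d n : ℕ) (c : ℂ) (X : Matrix (Fin n → Fin d) (Fin n → Fin d) ℂ) :
    symmetrize d n (c • X) = c • symmetrize d n X := by
  simp_rw [symmetrize, Matrix.mul_smul, Matrix.smul_mul, Finset.smul_sum, smul_comm c]

lemma Matrix.IsHermitian.symmetrize {d n : ℕ} {X : Matrix (Fin n → Fin d) (Fin n → Fin d) ℂ}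
    (hX : X.IsHermitian) : (symmetrize d n X).IsHermitian := by
  rw [symmetrize_eq_sum_submatrix]
  refine IsHermitian.smul ?_ ?_
  · exact isSelfAdjoint_sum _ fun π _ => hX.submatrix _
  · simp [IsSelfAdjoint]

lemma trace_symmetrize_mul (d n : ℕ) (X σ : Matrix (Fin n → Fin d) (Fin n → Fin d) ℂ)
    (hσ : ∀ π, σ.submatrix (precomp π) (precomp π) = σ) :
    (symmetrize d n X * σ).trace = (X * σ).trace := by
  have hconj : ∀ π, (X.submatrix (precomp π) (precomp π) * σ).trace = (X * σ).trace := by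
    intro π
    rw [← hσ π, submatrix_mul_equiv, trace_submatrix_equiv, hσ π]
  rw [symmetrize_eq_sum_submatrix, Matrix.smul_mul, trace_smul, Finset.sum_mul, trace_sum]
  simp_rw [hconj]
  exact inv_factorial_smul_sum_perm_const n _

lemma tensPow_submatrix_precomp (d m : ℕ) (ρ : Matrix (Fin d) (Fin d) ℂ)
    (π : Equiv.Perm (Fin m)) :
    (tensPow d m ρ).submatrix (precomp π) (precomp π) = tensPow d m ρ := by
  ext i j
  exact Equiv.prod_comp π fun a => ρ (i a) (j a)

lemma tensPow_mul (d m : ℕ) (M N : Matrix (Fin d) (Fin d) ℂ) :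
    tensPow d m (M * N) = tensPow d m M * tensPow d m N := by
  ext i j
  simp only [tensPow, mul_apply, Finset.prod_univ_sum, Fintype.piFinset_univ,
    Finset.prod_mul_distrib]

lemma tensPow_conjTranspose (d m : ℕ) (M : Matrix (Fin d) (Fin d) ℂ) :
    tensPow d m Mᴴ = (tensPow d m M)ᴴ := by
  ext i j
  simp [tensPow, star_prod]

open scoped MatrixOrder in
lemma Matrix.PosSemidef.tensPow {d m : ℕ} {ρ : Matrix (Fin d) (Fin d) ℂ}
    (hρ : ρ.PosSemidef) :
    (tensPow d m ρ).PosSemidef := by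
  obtain ⟨B, rfl⟩ := CStarAlgebra.nonneg_iff_eq_star_mul_self.mp hρ.nonneg
  rw [star_eq_conjTranspose, tensPow_mul, tensPow_conjTranspose]
  exact posSemidef_conjTranspose_mul_self _

lemma trace_tensPow (d m : ℕ) (ρ : Matrix (Fin d) (Fin d) ℂ) :
    (tensPow d m ρ).trace = ρ.trace ^ m :=
  (Fintype.sum_pow ρ.diag m).symm

open scoped Kronecker

lemma tensExt_submatrix_appendEquiv (d q n : ℕ)
    (A : Matrix (Fin q → Fin d) (Fin q → Fin d) ℂ) :
    (tensExt d q n A).submatrix (Fin.appendEquiv q n) (Fin.appendEquiv q n) = A ⊗ₖ 1 := by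
  ext ⟨x, y⟩ ⟨u, v⟩
  simp [tensExt, kroneckerMap_apply, one_apply, Fintype.prod_boole, funext_iff]

lemma tensPow_submatrix_appendEquiv (d q n : ℕ) (ρ : Matrix (Fin d) (Fin d) ℂ) :
    (tensPow d (q + n) ρ).submatrix (Fin.appendEquiv q n) (Fin.appendEquiv q n) =
      tensPow d q ρ ⊗ₖ tensPow d n ρ := by
  ext ⟨x, y⟩ ⟨u, v⟩
  simp [tensPow, kroneckerMap_apply, Fin.prod_univ_add]

lemma trace_tensExt_mul_tensPow (d q n : ℕ) (A : Matrix (Fin q → Fin d) (Fin q → Fin d) ℂ)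
    (ρ : Matrix (Fin d) (Fin d) ℂ) :
    (tensExt d q n A * tensPow d (q + n) ρ).trace =
      (A * tensPow d q ρ).trace * (tensPow d n ρ).trace := by
  rw [← trace_submatrix_equiv _ (Fin.appendEquiv q n),
    ← submatrix_mul_equiv _ _ _ (Fin.appendEquiv q n),
    tensExt_submatrix_appendEquiv, tensPow_submatrix_appendEquiv, ← mul_kronecker_mul,
    Matrix.one_mul, trace_kronecker]

def extendPerm (q n : ℕ) (σ : Equiv.Perm (Fin q)) : Equiv.Perm (Fin (q + n)) :=
  finSumFinEquiv.permCongr (σ.sumCongr 1)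

@[simp] lemma extendPerm_castAdd (q n : ℕ) (σ : Equiv.Perm (Fin q)) (a : Fin q) :
    extendPerm q n σ (Fin.castAdd n a) = Fin.castAdd n (σ a) := by
  simp [extendPerm, Equiv.permCongr_apply]

@[simp] lemma extendPerm_natAdd (q n : ℕ) (σ : Equiv.Perm (Fin q)) (b : Fin n) :
    extendPerm q n σ (Fin.natAdd q b) = Fin.natAdd q b := by
  simp [extendPerm, Equiv.permCongr_apply]

lemma tensExt_submatrix_precomp (d q n : ℕ) (A : Matrix (Fin q → Fin d) (Fin q → Fin d) ℂ)
    (σ : Equiv.Perm (Fin q)) :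
    tensExt d q n (A.submatrix (precomp σ) (precomp σ)) =
      (tensExt d q n A).submatrix (precomp (extendPerm q n σ))
        (precomp (extendPerm q n σ)) := by
  ext i j
  simp [tensExt, Function.comp_def]

lemma tensExt_smul (d q n : ℕ) (c : ℂ) (A : Matrix (Fin q → Fin d) (Fin q → Fin d) ℂ) :
    tensExt d q n (c • A) = c • tensExt d q n A := by
  ext i j
  simp [tensExt, mul_assoc]

lemma tensExt_sum {ι : Type*} (d q n : ℕ) (s : Finset ι)
    (A : ι → Matrix (Fin q → Fin d) (Fin q → Fin d) ℂ) :
    tensExt d q n (∑ i ∈ s, A i) = ∑ i ∈ s, tensExt d q n (A i) := by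
  ext i j
  simp [tensExt, Matrix.sum_apply, Finset.sum_mul]

lemma Matrix.IsHermitian.tensExt {d q n : ℕ} {A : Matrix (Fin q → Fin d) (Fin q → Fin d) ℂ}
    (hA : A.IsHermitian) : (tensExt d q n A).IsHermitian := by
  ext i j
  simp [_root_.tensExt, hA.apply, star_prod, apply_ite, eq_comm]

lemma symmetrize_tensExt_symmetrize (d q n : ℕ)
    (A : Matrix (Fin q → Fin d) (Fin q → Fin d) ℂ) :
    symmetrize d (q + n) (tensExt d q n (symmetrize d q A)) =
      symmetrize d (q + n) (tensExt d q n A) := by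
  simp_rw [symmetrize_eq_sum_submatrix d q, tensExt_smul, tensExt_sum, symmetrize_smul,
    symmetrize_sum, tensExt_submatrix_precomp, symmetrize_submatrix_precomp]
  exact inv_factorial_smul_sum_perm_const q _

theorem stmt2_general (d q : ℕ)
    (A : Matrix (Fin q → Fin d) (Fin q → Fin d) ℂ)
    (hA : (symmetrize d q A).IsHermitian) :
    ∀ n : ℕ, ∀ ρ : Matrix (Fin d) (Fin d) ℂ, IsDensity d ρ →
      ((symmetrize d q A) * tensPow d q ρ).trace.re ≤
        lamMax (symmetrize d (q + n) (tensExt d q n A)) := by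
  rintro n ρ ⟨hρ, htr⟩
  have hM : (symmetrize d (q + n) (tensExt d q n A)).IsHermitian :=
    symmetrize_tensExt_symmetrize d q n A ▸ hA.tensExt.symmetrize
  calc ((symmetrize d q A) * tensPow d q ρ).trace.re
      = (A * tensPow d q ρ).trace.re := by
        rw [trace_symmetrize_mul _ _ _ _ (tensPow_submatrix_precomp d q ρ)]
    _ = (tensExt d q n A * tensPow d (q + n) ρ).trace.re := by
        rw [trace_tensExt_mul_tensPow, trace_tensPow, htr, one_pow, mul_one]
    _ = (symmetrize d (q + n) (tensExt d q n A) * tensPow d (q + n) ρ).trace.re := by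
        rw [trace_symmetrize_mul _ _ _ _ (tensPow_submatrix_precomp d (q + n) ρ)]
    _ ≤ lamMax (symmetrize d (q + n) (tensExt d q n A)) :=
        hM.re_trace_mul_le_lamMax hρ.tensPow (by rw [trace_tensPow, htr, one_pow])

/-- For `q ≥ 1` and `A` on `ℋ^{⊗q}` with Hermitian symmetric part,
for every `n ≥ 0` and every density matrix `ρ` on `ℂ^d`,
`Tr[𝖯_q(A) ρ^{⊗q}] ≤ λ_max(𝖯_{q+n}(A ⊗ I^{⊗n}))`: each `μ_n(A)` is an upper bound on
`max_ρ Tr[A ρ^{⊗q}]`. -/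
theorem stmt2 (d q : ℕ) (hd : 1 ≤ d) (hq : 1 ≤ q)
    (A : Matrix (Fin q → Fin d) (Fin q → Fin d) ℂ)
    (hA : (symmetrize d q A).IsHermitian) :
    ∀ n : ℕ, ∀ ρ : Matrix (Fin d) (Fin d) ℂ, IsDensity d ρ →
      ((symmetrize d q A) * tensPow d q ρ).trace.re ≤
        lamMax (symmetrize d (q + n) (tensExt d q n A)) :=
  stmt2_general d q A hA
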